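/- arXiv:0903.3706 — 5 statements merged into one kernel-verified Lean document; each statement's English description precedes it below -/
import Mathlib

section
/- Let 𝔭 and F be finite-dimensional real inner product spaces, let X₁,…,X_N be an orthonormal basis of 𝔭, and let ρ : 𝔭 → End(F) be a linear map such that ρ(X) is self-adjoint for every X ∈ 𝔭. For a linear map η : 𝔭 → F define Tη : 𝔭 → F by Tη(Y) = Σ_{k=1}^{N} [ ρ(X_k)(ρ(X_k)(η(Y))) + (ρ(Y)∘ρ(X_k) − ρ(X_k)∘ρ(Y))(η(X_k)) ]. Define the bilinear map β : 𝔭 × 𝔭 → F by β(X,Y) = ρ(X)(η(Y)), its skew-symmetric part α(X,Y) = ½(β(X,Y) − β(Y,X)), and Trace(β) = Σ_{k=1}^{N} β(X_k, X_k). Then Σ_{ℓ=1}^{N} ⟨Tη(X_ℓ), η(X_ℓ)⟩ = 2·Σ_{k,ℓ=1}^{N} ‖α(X_k, X_ℓ)‖² + ‖Trace(β)‖². -/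
/-!
Self-adjointness moves every `ρ(X_k)` onto `η`, so with `β_kl = ρ(X_k)(η(X_l))` the left side
becomes `Σ_{k,l} (‖β_kl‖² − ⟪β_lk, β_kl⟫ + ⟪β_kk, β_ll⟫)`. Expanding `‖α_kl‖²` and using the
symmetry `k ↔ l`, the first two terms sum to `2 Σ ‖α_kl‖²`, and the last is `‖Trace β‖²`.
-/

open Finset

open scoped RealInnerProductSpace

section

variable {F : Type*} [NormedAddCommGroup F] [InnerProductSpace ℝ F]

theorem LinearMap.IsSymmetric.inner_commutator_apply {S T : F →ₗ[ℝ] F}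
    (hS : S.IsSymmetric) (hT : T.IsSymmetric) (u w : F) :
    ⟪S (T u) - T (S u), w⟫ = ⟪T u, S w⟫ - ⟪S u, T w⟫ := by
  rw [inner_sub_left, hS (T u), hT (S u)]

theorem norm_sum_sq_eq_sum_sum_inner {ι : Type*} (s : Finset ι) (v : ι → F) :
    ‖∑ k ∈ s, v k‖ ^ 2 = ∑ k ∈ s, ∑ l ∈ s, ⟪v k, v l⟫ := by
  rw [← real_inner_self_eq_norm_sq, sum_inner]
  simp only [inner_sum]

theorem two_mul_sum_sum_norm_sq_half_smul_sub {ι : Type*} (s : Finset ι) (B : ι → ι → F) :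
    2 * ∑ k ∈ s, ∑ l ∈ s, ‖(1 / 2 : ℝ) • (B k l - B l k)‖ ^ 2
      = ∑ k ∈ s, ∑ l ∈ s, (‖B k l‖ ^ 2 - ⟪B l k, B k l⟫) := by
  have hpoint : ∀ k l, 2 * ‖(1 / 2 : ℝ) • (B k l - B l k)‖ ^ 2
      = (‖B k l‖ ^ 2 + ‖B l k‖ ^ 2) / 2 - ⟪B l k, B k l⟫ := by
    intro k l
    rw [norm_smul, mul_pow, norm_sub_sq_real, real_inner_comm]
    norm_num
    ring
  have htranspose : ∑ k ∈ s, ∑ l ∈ s, ‖B l k‖ ^ 2 = ∑ k ∈ s, ∑ l ∈ s, ‖B k l‖ ^ 2 :=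
    sum_comm
  simp only [mul_sum, hpoint, sum_sub_distrib, ← sum_div, sum_add_distrib, htranspose]
  ring

end

theorem matsushima_murakami_one_forms_general
    {𝔭 F : Type*} [NormedAddCommGroup 𝔭] [InnerProductSpace ℝ 𝔭]
    [NormedAddCommGroup F] [InnerProductSpace ℝ F]
    {N : ℕ} (b : OrthonormalBasis (Fin N) ℝ 𝔭)
    (ρ : 𝔭 →ₗ[ℝ] F →ₗ[ℝ] F)
    (hρ : ∀ X : 𝔭, (ρ X).IsSymmetric)
    (η : 𝔭 →ₗ[ℝ] F) :
    (∑ l : Fin N,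
        ⟪∑ k : Fin N,
            (ρ (b k) (ρ (b k) (η (b l))) +
              (ρ (b l) (ρ (b k) (η (b k))) - ρ (b k) (ρ (b l) (η (b k))))),
          η (b l)⟫)
      = 2 * (∑ k : Fin N, ∑ l : Fin N,
            ‖(1 / 2 : ℝ) • (ρ (b k) (η (b l)) - ρ (b l) (η (b k)))‖ ^ 2)
        + ‖∑ k : Fin N, ρ (b k) (η (b k))‖ ^ 2 := by
  set B : Fin N → Fin N → F := fun k l => ρ (b k) (η (b l))
  have hsummand : ∀ k l, ⟪ρ (b k) (ρ (b k) (η (b l))) +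
      (ρ (b l) (ρ (b k) (η (b k))) - ρ (b k) (ρ (b l) (η (b k)))), η (b l)⟫
        = ‖B k l‖ ^ 2 - ⟪B l k, B k l⟫ + ⟪B k k, B l l⟫ := by
    intro k l
    rw [inner_add_left, (hρ (b l)).inner_commutator_apply (hρ (b k)), hρ (b k),
      real_inner_self_eq_norm_sq]
    ring
  rw [two_mul_sum_sum_norm_sq_half_smul_sub, norm_sum_sq_eq_sum_sum_inner]
  simp only [sum_inner, hsummand]
  rw [sum_comm]
  simp only [sum_add_distrib]
  rfl

/-- **Matsushima–Murakami computation for 1-forms.** If `X₁,…,X_N` is an orthonormal basis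
of `𝔭`, `ρ : 𝔭 → End F` is linear with self-adjoint values, `η : 𝔭 → F` is linear,
`β(X,Y) = ρ(X)(η(Y))`, `α` is the skew part of `β` and
`Tη(Y) = Σ_k ρ(X_k)²(η(Y)) + (ρ(Y)ρ(X_k) − ρ(X_k)ρ(Y))(η(X_k))`, then
`Σ_ℓ ⟪Tη(X_ℓ), η(X_ℓ)⟫ = 2 Σ_{k,ℓ} ‖α(X_k,X_ℓ)‖² + ‖Trace β‖²`. -/
theorem matsushima_murakami_one_forms
    {𝔭 F : Type*} [NormedAddCommGroup 𝔭] [InnerProductSpace ℝ 𝔭]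
    [NormedAddCommGroup F] [InnerProductSpace ℝ F]
    [FiniteDimensional ℝ 𝔭] [FiniteDimensional ℝ F]
    {N : ℕ} (b : OrthonormalBasis (Fin N) ℝ 𝔭)
    (ρ : 𝔭 →ₗ[ℝ] F →ₗ[ℝ] F)
    (hρ : ∀ X : 𝔭, (ρ X).IsSymmetric)
    (η : 𝔭 →ₗ[ℝ] F) :
    (∑ l : Fin N,
        ⟪∑ k : Fin N,
            (ρ (b k) (ρ (b k) (η (b l))) +
              (ρ (b l) (ρ (b k) (η (b k))) - ρ (b k) (ρ (b l) (η (b k))))),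
          η (b l)⟫)
      = 2 * (∑ k : Fin N, ∑ l : Fin N,
            ‖(1 / 2 : ℝ) • (ρ (b k) (η (b l)) - ρ (b l) (η (b k)))‖ ^ 2)
        + ‖∑ k : Fin N, ρ (b k) (η (b k))‖ ^ 2 :=
  matsushima_murakami_one_forms_general b ρ hρ η
end

section
/- Let n ≥ 1 and let B : ℂⁿ → ℂⁿ be an ℝ-linear map. Assume: (1) the scalar-valued form β₃(x,y) = xᵀ·B(y) = Σᵢ xᵢ (B y)ᵢ is symmetric, i.e. β₃(x,y) = β₃(y,x) for all x, y ∈ ℂⁿ; and (2) the matrix-valued form β₁(x,y) = B(y)x* + (B(y)x*)ᵀ is symmetric, i.e. β₁(x,y) = β₁(y,x) for all x, y ∈ ℂⁿ, where B(y)x* denotes the n×n matrix with entries (B y)ᵢ · conj(x_j). Then B = 0. -/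
noncomputable section

/-- If `B : ℂⁿ → ℂⁿ` is `ℝ`-linear, the form `β₃(x,y) = xᵀ·B(y)` is symmetric, and the
matrix-valued form `β₁(x,y) = B(y)x* + (B(y)x*)ᵀ` is symmetric, then `B = 0`. -/
theorem beta_one_three_symmetric_imp_zero (n : ℕ) (hn : 1 ≤ n)
    (B : (Fin n → ℂ) →ₗ[ℝ] (Fin n → ℂ))
    (h3 : ∀ x y : Fin n → ℂ, ∑ i, x i * B y i = ∑ i, y i * B x i)
    (h1 : ∀ x y : Fin n → ℂ, ∀ i j : Fin n,
      B y i * (starRingEnd ℂ) (x j) + B y j * (starRingEnd ℂ) (x i) =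
        B x i * (starRingEnd ℂ) (y j) + B x j * (starRingEnd ℂ) (y i)) :
    B = 0 := by
  have key : ∀ x y : Fin n → ℂ, ∀ i,
      B y i * (starRingEnd ℂ) (x i) = B x i * (starRingEnd ℂ) (y i) := by
    intro x y i
    have h := h1 x y i i
    linear_combination h / 2
  have hc : ∀ (y : Fin n → ℂ) (k : Fin n),
      B y k = B (Pi.single k 1) k * (starRingEnd ℂ) (y k) := by
    intro y k
    have h := key (Pi.single k 1) y k
    simpa using h
  have hc0 : ∀ k, B (Pi.single k 1) k = 0 := by
    intro k
    have h := h3 (Pi.single k 1) (Pi.single k Complex.I)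
    rw [Fintype.sum_eq_single k (fun i hik => by simp [Pi.single_apply, hik]),
      Fintype.sum_eq_single k (fun i hik => by simp [Pi.single_apply, hik])] at h
    rw [hc (Pi.single k Complex.I) k] at h
    simp only [Pi.single_eq_same, one_mul, map_one, mul_one, Complex.conj_I] at h
    have h2 : (2 * Complex.I) * B (Pi.single k 1) k = 0 := by linear_combination -h
    rcases mul_eq_zero.1 h2 with h' | h'
    · exact absurd h' (by simp [Complex.I_ne_zero])
    · exact h'
  apply LinearMap.ext
  intro y
  funext k
  rw [hc y k, hc0 k, zero_mul]
  simp
end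
end

section
/- Let n ≥ 1 and let X ∈ M_n(ℂ) be symmetric (Xᵀ = X). Then in M_n(ℍ): [jX, j(iX)] = ι(−2i·X̄·X), and λ([jX, j(iX)]) = −2·Σ_{k,l} |X_{kl}|², where for a quaternionic matrix M one sets λ(M) := −Re( i · Σ_k M_{kk} ) (quaternionic real part, i the quaternion unit). In particular λ([jX, j(iX)]) < 0 whenever X ≠ 0. -/
/-! Since `j ι(z) = ι(z̄) j` and `j² = -1`, the product `jX · jY` is `-ι(X̄ Y)`; for `Y = iX` the two
orders differ only by the sign of `ī = -i`, so `[jX, j(iX)] = ι(-2i X̄ X)`. As `i = ι(i)`, the form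
`λ` composed with `ι` is the imaginary part of the trace, and for symmetric `X`
`tr(X̄ X) = Σ X̄_kl X_lk = Σ |X_kl|²`. -/

noncomputable section

open Matrix

/-- The ring embedding `ℂ → ℍ` sending `a + b i` to the quaternion with real part `a`
and `i`-part `b`. -/
def iotaC : ℂ →+* Quaternion ℝ where
  toFun z := ⟨z.re, z.im, 0, 0⟩
  map_one' := by ext <;> simp [Quaternion.re_one, Quaternion.imI_one, Quaternion.imJ_one, Quaternion.imK_one]
  map_mul' z w := by
    change (QuaternionAlgebra.mk _ _ _ _ : QuaternionAlgebra ℝ (-1) 0 (-1)) =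
      QuaternionAlgebra.mk _ _ _ _ * QuaternionAlgebra.mk _ _ _ _
    erw [QuaternionAlgebra.mk_mul_mk]
    ext <;>
      simp [Complex.mul_re, Complex.mul_im, sub_eq_add_neg]
  map_zero' := by ext <;> simp [Quaternion.re_zero, Quaternion.imI_zero, Quaternion.imJ_zero, Quaternion.imK_zero]
  map_add' z w := by
    change (QuaternionAlgebra.mk _ _ _ _ : QuaternionAlgebra ℝ (-1) 0 (-1)) =
      QuaternionAlgebra.mk _ _ _ _ + QuaternionAlgebra.mk _ _ _ _
    erw [QuaternionAlgebra.mk_add_mk]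
    ext <;> simp

/-- The quaternion unit `i`. -/
def iq : Quaternion ℝ := ⟨0, 1, 0, 0⟩

/-- The quaternion unit `j`. -/
def jq : Quaternion ℝ := ⟨0, 0, 1, 0⟩

/-- For a complex matrix `X`, `jMat X` is the quaternionic matrix whose `(k,l)` entry is
`j · ι(X k l)`. -/
def jMat {ι κ : Type*} (X : Matrix ι κ ℂ) : Matrix ι κ (Quaternion ℝ) :=
  Matrix.of fun k l => jq * iotaC (X k l)

/-- The invariant linear form `λ(M) = −Re(i·Σ_k M_{kk})` on quaternionic matrices. -/
def lamForm {n : ℕ} (M : Matrix (Fin n) (Fin n) (Quaternion ℝ)) : ℝ :=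
  -(iq * ∑ k, M k k).re

@[simp] lemma iotaC_re (z : ℂ) : (iotaC z).re = z.re := rfl
@[simp] lemma iotaC_imI (z : ℂ) : (iotaC z).imI = z.im := rfl
@[simp] lemma iotaC_imJ (z : ℂ) : (iotaC z).imJ = 0 := rfl
@[simp] lemma iotaC_imK (z : ℂ) : (iotaC z).imK = 0 := rfl

@[simp] lemma jq_re : jq.re = 0 := rfl
@[simp] lemma jq_imI : jq.imI = 0 := rfl
@[simp] lemma jq_imJ : jq.imJ = 1 := rfl
@[simp] lemma jq_imK : jq.imK = 0 := rfl

lemma iotaC_I : iotaC Complex.I = iq := by ext <;> simp [iq]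

lemma jq_mul_jq : jq * jq = -1 := by
  ext <;> simp [Quaternion.re_mul, Quaternion.imI_mul, Quaternion.imJ_mul, Quaternion.imK_mul,
    Quaternion.re_one, Quaternion.imI_one, Quaternion.imJ_one, Quaternion.imK_one]

lemma jq_mul_iotaC (z : ℂ) : jq * iotaC z = iotaC (starRingEnd ℂ z) * jq := by
  ext <;> simp [Quaternion.re_mul, Quaternion.imI_mul, Quaternion.imJ_mul, Quaternion.imK_mul]

lemma jq_mul_iotaC_mul_jq_mul_iotaC (z w : ℂ) :
    jq * iotaC z * (jq * iotaC w) = -iotaC (starRingEnd ℂ z * w) := by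
  rw [jq_mul_iotaC, mul_assoc, ← mul_assoc jq, jq_mul_jq, map_mul]
  noncomm_ring

lemma jMat_mul_jMat {ι κ μ : Type*} [Fintype κ] (X : Matrix ι κ ℂ) (Y : Matrix κ μ ℂ) :
    jMat X * jMat Y = -(X.map (starRingEnd ℂ) * Y).map iotaC := by
  ext k l : 1
  simp [jMat, mul_apply, jq_mul_iotaC_mul_jq_mul_iotaC]

lemma jMat_commutator_jMat_I_smul {ι : Type*} [Fintype ι] (X : Matrix ι ι ℂ) :
    jMat X * jMat (Complex.I • X) - jMat (Complex.I • X) * jMat X =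
      ((-2 * Complex.I) • (X.map (starRingEnd ℂ) * X)).map iotaC := by
  have hconj : (Complex.I • X).map (starRingEnd ℂ) = -Complex.I • X.map (starRingEnd ℂ) := by
    ext
    simp
  rw [jMat_mul_jMat, jMat_mul_jMat, hconj, ← Matrix.map_neg _ (map_neg iotaC),
    ← Matrix.map_neg _ (map_neg iotaC), ← Matrix.map_sub _ (map_sub iotaC), Matrix.mul_smul,
    Matrix.smul_mul]
  congr 1
  module

lemma lamForm_map_iotaC {n : ℕ} (A : Matrix (Fin n) (Fin n) ℂ) :
    lamForm (A.map iotaC) = A.trace.im := by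
  simp only [lamForm, map_apply, ← map_sum, ← iotaC_I, ← map_mul, iotaC_re]
  simp [trace]

lemma trace_map_conj_mul_self_of_isSymm {n : Type*} [Fintype n] {X : Matrix n n ℂ}
    (hX : X.IsSymm) :
    (X.map (starRingEnd ℂ) * X).trace = ∑ k, ∑ l, ((‖X k l‖ ^ 2 : ℝ) : ℂ) := by
  refine Finset.sum_congr rfl fun k _ => ?_
  rw [diag_apply, mul_apply]
  refine Finset.sum_congr rfl fun l _ => ?_
  rw [map_apply, hX.apply k l, Complex.conj_mul', Complex.ofReal_pow]

lemma lamForm_jMat_commutator {n : ℕ} {X : Matrix (Fin n) (Fin n) ℂ} (hX : X.IsSymm) :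
    lamForm (jMat X * jMat (Complex.I • X) - jMat (Complex.I • X) * jMat X) =
      -2 * ∑ k, ∑ l, ‖X k l‖ ^ 2 := by
  rw [jMat_commutator_jMat_I_smul, lamForm_map_iotaC, trace_smul,
    trace_map_conj_mul_self_of_isSymm hX]
  simp only [smul_eq_mul, ← Complex.ofReal_sum, Complex.im_mul_ofReal]
  simp

lemma sum_sum_sq_norm_pos {ι κ E : Type*} [Fintype ι] [Fintype κ] [NormedAddCommGroup E]
    {X : Matrix ι κ E} (hX : X ≠ 0) : 0 < ∑ k, ∑ l, ‖X k l‖ ^ 2 := by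
  obtain ⟨k, l, hkl⟩ : ∃ k l, X k l ≠ 0 := by
    contrapose! hX
    exact Matrix.ext hX
  exact Finset.sum_pos' (fun _ _ => Finset.sum_nonneg fun _ _ => by positivity)
    ⟨k, Finset.mem_univ _, Finset.sum_pos' (fun _ _ => by positivity)
      ⟨l, Finset.mem_univ _, pow_pos (norm_pos_iff.mpr hkl) 2⟩⟩

theorem anisotropy_sp_general (n : ℕ)
    (X : Matrix (Fin n) (Fin n) ℂ) (hX : Xᵀ = X) :
    jMat X * jMat (Complex.I • X) - jMat (Complex.I • X) * jMat X =
      (((-2 * Complex.I) • (X.map (starRingEnd ℂ) * X))).map iotaC ∧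
    lamForm (jMat X * jMat (Complex.I • X) - jMat (Complex.I • X) * jMat X) =
      -2 * ∑ k, ∑ l, ‖X k l‖ ^ 2 ∧
    (X ≠ 0 →
      lamForm (jMat X * jMat (Complex.I • X) - jMat (Complex.I • X) * jMat X) < 0) := by
  have hlam := lamForm_jMat_commutator hX
  refine ⟨jMat_commutator_jMat_I_smul X, hlam, fun hX0 => ?_⟩
  rw [hlam]
  linarith [sum_sum_sq_norm_pos hX0]

/-- For a symmetric complex matrix `X`: `[jX, j(iX)] = ι(−2i X̄ X)` and
`λ([jX, j(iX)]) = −2 Σ_{k,l} |X_{kl}|²`; in particular `λ([jX, j(iX)]) < 0` if `X ≠ 0`. -/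
theorem anisotropy_sp (n : ℕ) (hn : 1 ≤ n)
    (X : Matrix (Fin n) (Fin n) ℂ) (hX : Xᵀ = X) :
    jMat X * jMat (Complex.I • X) - jMat (Complex.I • X) * jMat X =
      (((-2 * Complex.I) • (X.map (starRingEnd ℂ) * X))).map iotaC ∧
    lamForm (jMat X * jMat (Complex.I • X) - jMat (Complex.I • X) * jMat X) =
      -2 * ∑ k, ∑ l, ‖X k l‖ ^ 2 ∧
    (X ≠ 0 →
      lamForm (jMat X * jMat (Complex.I • X) - jMat (Complex.I • X) * jMat X) < 0) :=
  anisotropy_sp_general n X hX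
end
end

section
/- Let m ≥ 1 and let J, B, B' ∈ M_m(ℝ) with Jᵀ = −J. Define λ'(B,B') = Tr( J·(−B B'ᵀ + B' Bᵀ + Bᵀ B' − B'ᵀ B) ) and λ''(B,B') = Tr( J·(−B B'ᵀ + B' Bᵀ − Bᵀ B' + B'ᵀ B) ). Then: (i) if JB = −BJ and JB' = −B'J, then λ'(B,B') = 0; (ii) if JB = BJ and JB' = B'J, then λ''(B,B') = 0; (iii) if JB = BJ and JB' = −B'J, then λ'(B,B') = 0 and λ''(B,B') = 0. -/
noncomputable section

open Matrix

/-- Vanishing of the invariant forms `λ'` and `λ''` on brackets of the appropriate type: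
`λ'` vanishes when both arguments anticommute with `J`, `λ''` when both commute with `J`,
and both vanish in the mixed case. -/
theorem lambda_vanishing (m : ℕ) (hm : 1 ≤ m)
    (J B B' : Matrix (Fin m) (Fin m) ℝ) (hJ : Jᵀ = -J) :
    ((J * B = -(B * J) → J * B' = -(B' * J) →
        Matrix.trace (J * (-(B * B'ᵀ) + B' * Bᵀ + Bᵀ * B' - B'ᵀ * B)) = 0)) ∧
    ((J * B = B * J → J * B' = B' * J →
        Matrix.trace (J * (-(B * B'ᵀ) + B' * Bᵀ - Bᵀ * B' + B'ᵀ * B)) = 0)) ∧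
    ((J * B = B * J → J * B' = -(B' * J) →
        Matrix.trace (J * (-(B * B'ᵀ) + B' * Bᵀ + Bᵀ * B' - B'ᵀ * B)) = 0 ∧
        Matrix.trace (J * (-(B * B'ᵀ) + B' * Bᵀ - Bᵀ * B' + B'ᵀ * B)) = 0)) := by
  have key : ∀ X Y : Matrix (Fin m) (Fin m) ℝ,
      trace (J * X * Yᵀ) = - trace (J * Y * Xᵀ) := by
    intro X Y
    have h1 : trace ((J * X * Yᵀ)ᵀ) = trace (J * X * Yᵀ) := trace_transpose _
    rw [transpose_mul, transpose_mul, transpose_transpose, hJ] at h1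
    rw [← h1, Matrix.trace_mul_cycle]
    simp only [Matrix.mul_neg, Matrix.neg_mul, trace_neg, neg_inj, ← mul_assoc]
    exact (Matrix.trace_mul_cycle Xᵀ J Y).symm
  have key2 : ∀ X Y : Matrix (Fin m) (Fin m) ℝ,
      trace (J * Xᵀ * Y) = - trace (J * Yᵀ * X) := by
    intro X Y
    have h1 : trace ((J * Xᵀ * Y)ᵀ) = trace (J * Xᵀ * Y) := trace_transpose _
    rw [transpose_mul, transpose_mul, transpose_transpose, hJ] at h1
    rw [← h1, Matrix.trace_mul_cycle]
    simp only [Matrix.mul_neg, Matrix.neg_mul, trace_neg, neg_inj, ← mul_assoc]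
    exact (Matrix.trace_mul_cycle X J Yᵀ).symm
  set a := trace (J * B * B'ᵀ) with ha
  set b := trace (J * B' * Bᵀ) with hb
  set c := trace (J * Bᵀ * B') with hc
  set d := trace (J * B'ᵀ * B) with hd
  have hab : a = -b := key B B'
  have hcd : d = -c := key2 B' B
  have expand1 : trace (J * (-(B * B'ᵀ) + B' * Bᵀ + Bᵀ * B' - B'ᵀ * B))
      = -a + b + c - d := by
    simp [Matrix.mul_add, Matrix.mul_sub, Matrix.mul_neg, ha, hb, hc, hd, mul_assoc]
  have expand2 : trace (J * (-(B * B'ᵀ) + B' * Bᵀ - Bᵀ * B' + B'ᵀ * B))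
      = -a + b - c + d := by
    simp [Matrix.mul_add, Matrix.mul_sub, Matrix.mul_neg, ha, hb, hc, hd, mul_assoc]
  have hcyc : trace (J * Bᵀ * B') = trace (B' * J * Bᵀ) := by
    rw [Matrix.trace_mul_cycle]
  -- b in terms of c when B' anticommutes with J
  have hbanti : J * B' = -(B' * J) → b = -c := by
    intro h2
    calc b = trace ((J * B') * Bᵀ) := hb
      _ = trace ((-(B' * J)) * Bᵀ) := by rw [h2]
      _ = - trace (B' * J * Bᵀ) := by simp
      _ = - trace (J * Bᵀ * B') := by rw [← hcyc]
      _ = -c := by rw [← hc]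
  refine ⟨?_, ?_, ?_⟩
  · intro h1 h2
    rw [expand1, hab, hcd, hbanti h2]; ring
  · intro h1 h2
    have hb0 : b = c := by
      calc b = trace ((J * B') * Bᵀ) := hb
        _ = trace ((B' * J) * Bᵀ) := by rw [h2]
        _ = trace (J * Bᵀ * B') := by rw [hcyc]
        _ = c := hc.symm
    rw [expand2, hab, hcd, hb0]; ring
  · intro h1 h2
    have hBt : Bᵀ * J = J * Bᵀ := by
      have h := congrArg Matrix.transpose h1
      rw [transpose_mul, transpose_mul, hJ] at h
      simp only [Matrix.mul_neg, Matrix.neg_mul, neg_inj] at h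
      exact h
    have hc0 : c = 0 := by
      have hcc : c = -c := by
        calc c = trace ((J * Bᵀ) * B') := hc
          _ = trace ((Bᵀ * J) * B') := by rw [hBt]
          _ = trace (Bᵀ * (J * B')) := by rw [mul_assoc]
          _ = trace (Bᵀ * (-(B' * J))) := by rw [h2]
          _ = - trace (Bᵀ * B' * J) := by simp [mul_assoc]
          _ = - trace (J * Bᵀ * B') := by rw [Matrix.trace_mul_cycle Bᵀ B' J]
          _ = -c := by rw [← hc]
      linarith
    have hb0 : b = -c := hbanti h2
    constructor
    · rw [expand1, hab, hcd, hb0]; ring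
    · rw [expand2, hab, hcd, hb0, hc0]; ring
end
end

section
/- Let m ≥ 1 and let C, D, C', D' ∈ M_m(ℝ) be symmetric matrices. Set J = [[0, −I_m],[I_m, 0]], B = [[C, −D],[D, C]], B' = [[C', −D'],[D', C']] ∈ M_{2m}(ℝ). Then Tr( J·(−B B'ᵀ + B' Bᵀ + Bᵀ B' − B'ᵀ B) ) = 8·Tr(D C' − C D'). In particular, taking B' = J·B (i.e. C' = −D, D' = C), the value equals −8·Tr(C² + D²) = −4·‖B‖²_F, which is strictly negative whenever B ≠ 0. -/
noncomputable section

open Matrix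

lemma trace_fromBlocks_aux {m : ℕ} (A B C D : Matrix (Fin m) (Fin m) ℝ) :
    Matrix.trace (Matrix.fromBlocks A B C D) = Matrix.trace A + Matrix.trace D := by
  simp [Matrix.trace, Matrix.diag, Fintype.sum_sum_type, Matrix.fromBlocks]

lemma key_aux (m : ℕ) (C D C' D' : Matrix (Fin m) (Fin m) ℝ)
    (hC : Cᵀ = C) (hD : Dᵀ = D) (hC' : C'ᵀ = C') (hD' : D'ᵀ = D') :
    Matrix.trace ((Matrix.fromBlocks 0 (-1) 1 0 : Matrix (Fin m ⊕ Fin m) (Fin m ⊕ Fin m) ℝ) *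
      (-(fromBlocks C (-D) D C * (fromBlocks C' (-D') D' C')ᵀ)
        + fromBlocks C' (-D') D' C' * (fromBlocks C (-D) D C)ᵀ
        + (fromBlocks C (-D) D C)ᵀ * fromBlocks C' (-D') D' C'
        - (fromBlocks C' (-D') D' C')ᵀ * fromBlocks C (-D) D C)) =
      8 * Matrix.trace (D * C' - C * D') := by
  simp only [Matrix.fromBlocks_transpose, Matrix.transpose_neg, hC, hD, hC', hD',
    Matrix.fromBlocks_multiply, Matrix.fromBlocks_add, Matrix.fromBlocks_neg, sub_eq_add_neg,
    Matrix.fromBlocks_multiply, trace_fromBlocks_aux, Matrix.trace_sub, Matrix.trace_add,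
    Matrix.trace_neg, Matrix.mul_neg, Matrix.neg_mul, neg_neg,
    Matrix.one_mul, Matrix.zero_mul, Matrix.trace_zero]
  rw [show Matrix.trace (C * D') = Matrix.trace (D' * C) from Matrix.trace_mul_comm _ _,
    show Matrix.trace (D * C') = Matrix.trace (C' * D) from Matrix.trace_mul_comm _ _]
  ring

lemma trace_sq_aux {m : ℕ} (C : Matrix (Fin m) (Fin m) ℝ) (hC : Cᵀ = C) :
    Matrix.trace (C * C) = ∑ i, ∑ j, C i j ^ 2 := by
  simp only [Matrix.trace, Matrix.diag, Matrix.mul_apply]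
  refine Finset.sum_congr rfl fun i _ => Finset.sum_congr rfl fun j _ => ?_
  have h1 : C j i = C i j := by
    conv_lhs => rw [← hC, Matrix.transpose_apply]
  rw [h1]; ring

/-- The invariant form `λ'` on the bracket of two elements of the `S²V_ℂ*`-summand:
for `J = [[0,−I],[I,0]]`, `B = [[C,−D],[D,C]]`, `B' = [[C',−D'],[D',C']]` with
`C, D, C', D'` symmetric, `Tr(J(−BB'ᵀ + B'Bᵀ + BᵀB' − B'ᵀB)) = 8 Tr(DC' − CD')`;
for `B' = J·B` the value is `−8 Tr(C² + D²) = −4‖B‖²_F < 0` whenever `B ≠ 0`. -/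
theorem lambda_prime_negative_definite (m : ℕ) (hm : 1 ≤ m)
    (C D C' D' : Matrix (Fin m) (Fin m) ℝ)
    (hC : Cᵀ = C) (hD : Dᵀ = D) (hC' : C'ᵀ = C') (hD' : D'ᵀ = D')
    (J : Matrix (Fin m ⊕ Fin m) (Fin m ⊕ Fin m) ℝ)
    (hJ : J = Matrix.fromBlocks 0 (-1) 1 0)
    (B B' : Matrix (Fin m ⊕ Fin m) (Fin m ⊕ Fin m) ℝ)
    (hB : B = Matrix.fromBlocks C (-D) D C)
    (hB' : B' = Matrix.fromBlocks C' (-D') D' C') :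
    Matrix.trace (J * (-(B * B'ᵀ) + B' * Bᵀ + Bᵀ * B' - B'ᵀ * B)) =
      8 * Matrix.trace (D * C' - C * D') ∧
    Matrix.trace (J * (-(B * (J * B)ᵀ) + (J * B) * Bᵀ + Bᵀ * (J * B) - (J * B)ᵀ * B)) =
      -8 * Matrix.trace (C * C + D * D) ∧
    -8 * Matrix.trace (C * C + D * D) = -4 * ∑ i, ∑ j, B i j ^ 2 ∧
    (B ≠ 0 →
      Matrix.trace (J * (-(B * (J * B)ᵀ) + (J * B) * Bᵀ + Bᵀ * (J * B) - (J * B)ᵀ * B))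
        < 0) := by
  have hJB : J * B = Matrix.fromBlocks (-D) (-C) C (-D) := by
    rw [hJ, hB, Matrix.fromBlocks_multiply]
    congr 1 <;> simp
  have h2 : Matrix.trace (J * (-(B * (J * B)ᵀ) + (J * B) * Bᵀ + Bᵀ * (J * B) - (J * B)ᵀ * B)) =
      -8 * Matrix.trace (C * C + D * D) := by
    rw [hJB, hJ, hB,
      key_aux m C D (-D) C hC hD (by rw [Matrix.transpose_neg, hD]) hC,
      Matrix.trace_sub, Matrix.trace_add, Matrix.mul_neg, Matrix.trace_neg]
    ring
  have h3 : -8 * Matrix.trace (C * C + D * D) = -4 * ∑ i, ∑ j, B i j ^ 2 := by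
    rw [Matrix.trace_add, trace_sq_aux C hC, trace_sq_aux D hD, hB]
    rw [Fintype.sum_sum_type]
    simp only [Fintype.sum_sum_type, Matrix.fromBlocks_apply₁₁, Matrix.fromBlocks_apply₁₂,
      Matrix.fromBlocks_apply₂₁, Matrix.fromBlocks_apply₂₂, Matrix.neg_apply, neg_sq,
      Finset.sum_add_distrib]
    ring
  refine ⟨?_, h2, h3, ?_⟩
  · rw [hJ, hB, hB']; exact key_aux m C D C' D' hC hD hC' hD'
  · intro hBne
    rw [h2, h3]
    obtain ⟨i, j, hj⟩ : ∃ i j, B i j ≠ 0 := by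
      by_contra h
      push_neg at h
      exact hBne (by ext a b; exact h a b)
    have hpos : 0 < ∑ i, ∑ j, B i j ^ 2 :=
      Finset.sum_pos' (fun i _ => Finset.sum_nonneg fun j _ => sq_nonneg _)
        ⟨i, Finset.mem_univ i, Finset.sum_pos' (fun j _ => sq_nonneg _)
          ⟨j, Finset.mem_univ j,
            lt_of_le_of_ne (sq_nonneg _) (Ne.symm (pow_ne_zero 2 hj))⟩⟩
    nlinarith
end
end
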